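/- arXiv:0704.0449 — 8 statements merged into one kernel-verified Lean document; each statement's English description precedes it below -/
import Mathlib

section
/- For all λ₁, λ₂, λ₃ ∈ ℂ, all nonzero x = (x₀,x₁,x₂) ∈ ℂ³, all nonzero t = (t₀,t₁) ∈ ℂ², and all nonzero y = (y₀,y₁,y₂) ∈ ℂ³: if there exist c, c′ ∈ ℂ with (x₀, ζx₁, ζ²x₂) = c·(x₀,x₁,x₂) and (y₀, ζy₁, ζ²y₂) = c′·(y₀,y₁,y₂) (i.e., the point ([x],[t],[y]) of ℙ²×ℙ¹×ℙ² is fixed by the generator g₁ : ([x₀:x₁:x₂],[t₀:t₁],[y₀:y₁:y₂]) ↦ ([x₀:ζx₁:ζ²x₂],[t₀:t₁],[y₀:ζy₁:ζ²y₂])), then F₁(x,t) ≠ 0 or F₂(t,y) ≠ 0. In particular, no fixed point of g₁ lies on X̃, so the induced ℤ₃-action generated by g₁ on X̃ is free. -/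
/-- The primitive cube root of unity `ζ = e^{2πi/3}`. -/
noncomputable def zetaCube : ℂ := Complex.exp (2 * Real.pi * Complex.I / 3)

/-- The first defining polynomial `F₁(x,t) = t₀(x₀³+x₁³+x₂³) + t₁ x₀x₁x₂` of `X̃`. -/
def F₁ (x : Fin 3 → ℂ) (t : Fin 2 → ℂ) : ℂ :=
  t 0 * (x 0 ^ 3 + x 1 ^ 3 + x 2 ^ 3) + t 1 * (x 0 * x 1 * x 2)

/-- The second defining polynomial
`F₂(t,y) = (λ₁t₀+t₁)(y₀³+y₁³+y₂³) + (λ₂t₀+λ₃t₁) y₀y₁y₂` of `X̃`. -/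
def F₂ (lam₁ lam₂ lam₃ : ℂ) (t : Fin 2 → ℂ) (y : Fin 3 → ℂ) : ℂ :=
  (lam₁ * t 0 + t 1) * (y 0 ^ 3 + y 1 ^ 3 + y 2 ^ 3)
    + (lam₂ * t 0 + lam₃ * t 1) * (y 0 * y 1 * y 2)

lemma zeta_ne_zero : zetaCube ≠ 0 := Complex.exp_ne_zero _

lemma zeta_pow_three : zetaCube ^ 3 = 1 := by
  unfold zetaCube
  rw [← Complex.exp_nat_mul]
  rw [show ((3:ℕ):ℂ) * (2 * Real.pi * Complex.I / 3) = 2 * Real.pi * Complex.I by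
    push_cast; ring]
  exact Complex.exp_two_pi_mul_I

lemma zeta_ne_one : zetaCube ≠ 1 := by
  unfold zetaCube
  rw [Ne, Complex.exp_eq_one_iff]
  push_neg
  intro n h
  have hne : (2 * (Real.pi:ℂ) * Complex.I) ≠ 0 := by
    simp [Real.pi_ne_zero, Complex.I_ne_zero]
  have key : (3 * (n:ℂ) - 1) * (2 * (Real.pi:ℂ) * Complex.I) = 0 := by
    linear_combination (-3:ℂ) * h
  rcases mul_eq_zero.1 key with h' | h'
  · have h3 : ((3 * n - 1 : ℤ) : ℂ) = ((0 : ℤ) : ℂ) := by push_cast; linear_combination h'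
    have := Int.cast_injective (α := ℂ) h3
    omega
  · exact hne h'

lemma zeta_sq_ne_one : zetaCube ^ 2 ≠ 1 := by
  intro h
  apply zeta_ne_one
  calc zetaCube = zetaCube ^ 3 / zetaCube ^ 2 := by
        field_simp [zeta_ne_zero]
    _ = 1 := by rw [zeta_pow_three, h]; simp

lemma zeta_sq_ne_zeta : zetaCube ^ 2 ≠ zetaCube := by
  intro h
  apply zeta_ne_one
  have := mul_right_cancel₀ zeta_ne_zero
    (by linear_combination h : zetaCube * zetaCube = 1 * zetaCube)
  exact this

lemma fixed_vec_struct (z : Fin 3 → ℂ) (hz : z ≠ 0)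
    (h : ∃ c : ℂ, ![z 0, zetaCube * z 1, zetaCube ^ 2 * z 2] = c • z) :
    z 0 ^ 3 + z 1 ^ 3 + z 2 ^ 3 ≠ 0 ∧ z 0 * z 1 * z 2 = 0 := by
  obtain ⟨c, hc⟩ := h
  have h0 : z 0 = c * z 0 := by simpa using congrFun hc 0
  have h1 : zetaCube * z 1 = c * z 1 := by simpa using congrFun hc 1
  have h2 : zetaCube ^ 2 * z 2 = c * z 2 := by simpa using congrFun hc 2
  have p01 : z 0 ≠ 0 → z 1 = 0 := by
    intro h0ne
    have hc1 : c = 1 := by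
      have := mul_right_cancel₀ h0ne (by linear_combination h0 : (1:ℂ) * z 0 = c * z 0)
      exact this.symm
    subst hc1
    by_contra h1ne
    exact zeta_ne_one (mul_right_cancel₀ h1ne h1)
  have p02 : z 0 ≠ 0 → z 2 = 0 := by
    intro h0ne
    have hc1 : c = 1 := by
      have := mul_right_cancel₀ h0ne (by linear_combination h0 : (1:ℂ) * z 0 = c * z 0)
      exact this.symm
    subst hc1
    by_contra h2ne
    exact zeta_sq_ne_one (mul_right_cancel₀ h2ne h2)
  have p12 : z 1 ≠ 0 → z 2 = 0 := by
    intro h1ne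
    have hcz : c = zetaCube := (mul_right_cancel₀ h1ne h1).symm
    subst hcz
    by_contra h2ne
    exact zeta_sq_ne_zeta (mul_right_cancel₀ h2ne h2)
  by_cases e0 : z 0 = 0
  · by_cases e1 : z 1 = 0
    · have e2 : z 2 ≠ 0 := by
        intro e2
        apply hz
        funext i
        fin_cases i <;> simp [e0, e1, e2]
      constructor
      · simp [e0, e1]
        exact e2
      · simp [e0]
    · have e2 := p12 e1
      constructor
      · simp [e0, e2]
        exact e1
      · simp [e0]
  · have e1 := p01 e0
    have e2 := p02 e0
    constructor
    · simp [e1, e2]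
      exact e0
    · simp [e1]

/-- **The generator `g₁` of `G₁ = ℤ₃` acts freely on `X̃`.**
If a point `([x],[t],[y])` of `ℙ²×ℙ¹×ℙ²` is fixed by
`g₁ : ([x₀:x₁:x₂],[t₀:t₁],[y₀:y₁:y₂]) ↦ ([x₀:ζx₁:ζ²x₂],[t₀:t₁],[y₀:ζy₁:ζ²y₂])`
(i.e. `(x₀, ζx₁, ζ²x₂)` is proportional to `x` and `(y₀, ζy₁, ζ²y₂)` is proportional
to `y`), then it does not lie on `X̃`: `F₁(x,t) ≠ 0` or `F₂(t,y) ≠ 0`. -/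
theorem g1_fixed_points_off_Xtilde
    (lam₁ lam₂ lam₃ : ℂ)
    (x : Fin 3 → ℂ) (hx : x ≠ 0)
    (t : Fin 2 → ℂ) (ht : t ≠ 0)
    (y : Fin 3 → ℂ) (hy : y ≠ 0)
    (hfx : ∃ c : ℂ, ![x 0, zetaCube * x 1, zetaCube ^ 2 * x 2] = c • x)
    (hfy : ∃ c' : ℂ, ![y 0, zetaCube * y 1, zetaCube ^ 2 * y 2] = c' • y) :
    F₁ x t ≠ 0 ∨ F₂ lam₁ lam₂ lam₃ t y ≠ 0 := by
  obtain ⟨hxs, hxp⟩ := fixed_vec_struct x hx hfx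
  obtain ⟨hys, hyp⟩ := fixed_vec_struct y hy hfy
  by_contra hcon
  push_neg at hcon
  obtain ⟨hF1, hF2⟩ := hcon
  unfold F₁ at hF1
  unfold F₂ at hF2
  rw [hxp] at hF1
  rw [hyp] at hF2
  simp only [mul_zero, add_zero] at hF1 hF2
  have ht0 : t 0 = 0 := by
    rcases mul_eq_zero.1 hF1 with h | h
    · exact h
    · exact absurd h hxs
  rw [ht0] at hF2
  simp only [mul_zero, zero_add] at hF2
  have ht1 : t 1 = 0 := by
    rcases mul_eq_zero.1 hF2 with h | h
    · exact h
    · exact absurd h hys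
  apply ht
  funext i
  fin_cases i <;> simp [ht0, ht1]
end

section
/- Assume 3λ₁ + λ₂ − 3λ₃ ≠ 9. For all nonzero x = (x₀,x₁,x₂) ∈ ℂ³, all nonzero t = (t₀,t₁) ∈ ℂ², and all nonzero y = (y₀,y₁,y₂) ∈ ℂ³: if there exist c, c′ ∈ ℂ with (x₁,x₂,x₀) = c·(x₀,x₁,x₂) and (y₁,y₂,y₀) = c′·(y₀,y₁,y₂) (i.e., the point ([x],[t],[y]) of ℙ²×ℙ¹×ℙ² is fixed by the generator g₂ : ([x₀:x₁:x₂],[t₀:t₁],[y₀:y₁:y₂]) ↦ ([x₁:x₂:x₀],[t₀:t₁],[y₁:y₂:y₀])), then F₁(x,t) ≠ 0 or F₂(t,y) ≠ 0. In particular, no fixed point of g₂ lies on X̃. -/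
/-- Structure of a cyclic-permutation eigenvector in `ℂ³`. -/
lemma cyc_struct (z : Fin 3 → ℂ) (hz : z ≠ 0) (h : ∃ c : ℂ, ![z 1, z 2, z 0] = c • z) :
    z 0 ≠ 0 ∧ z 0 ^ 3 + z 1 ^ 3 + z 2 ^ 3 = 3 * z 0 ^ 3 ∧ z 0 * z 1 * z 2 = z 0 ^ 3 := by
  obtain ⟨c, hc⟩ := h
  have h0 : z 1 = c * z 0 := by have := congrFun hc 0; simpa using this
  have h1 : z 2 = c * z 1 := by have := congrFun hc 1; simpa using this
  have h2 : z 0 = c * z 2 := by have := congrFun hc 2; simpa using this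
  have hz0 : z 0 ≠ 0 := by
    intro h00
    apply hz
    have hz1 : z 1 = 0 := by rw [h0, h00, mul_zero]
    have hz2 : z 2 = 0 := by rw [h1, hz1, mul_zero]
    funext i
    fin_cases i <;> simp [h00, hz1, hz2]
  have hc3 : c ^ 3 = 1 := by
    have h3 : (c ^ 3 - 1) * z 0 = 0 := by
      linear_combination (-1 : ℂ) * h2 + (-c) * h1 + (-(c ^ 2)) * h0
    rcases mul_eq_zero.mp h3 with h' | h'
    · linear_combination h'
    · exact absurd h' hz0
  refine ⟨hz0, ?_, ?_⟩
  · rw [h1, h0]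
    linear_combination (c ^ 3 + 2) * z 0 ^ 3 * hc3
  · rw [h1, h0]
    linear_combination z 0 ^ 3 * hc3

/-- **The generator `g₂` has no fixed points on `X̃` (for generic parameters).**
Assume `3λ₁ + λ₂ − 3λ₃ ≠ 9`. If a point `([x],[t],[y])` of `ℙ²×ℙ¹×ℙ²` is fixed by
`g₂ : ([x₀:x₁:x₂],[t₀:t₁],[y₀:y₁:y₂]) ↦ ([x₁:x₂:x₀],[t₀:t₁],[y₁:y₂:y₀])`
(i.e. `(x₁,x₂,x₀)` is proportional to `x` and `(y₁,y₂,y₀)` is proportional to `y`),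
then it does not lie on `X̃`: `F₁(x,t) ≠ 0` or `F₂(t,y) ≠ 0`. -/
theorem g2_fixed_points_off_Xtilde
    (lam₁ lam₂ lam₃ : ℂ) (hlam : 3 * lam₁ + lam₂ - 3 * lam₃ ≠ 9)
    (x : Fin 3 → ℂ) (hx : x ≠ 0)
    (t : Fin 2 → ℂ) (ht : t ≠ 0)
    (y : Fin 3 → ℂ) (hy : y ≠ 0)
    (hfx : ∃ c : ℂ, ![x 1, x 2, x 0] = c • x)
    (hfy : ∃ c' : ℂ, ![y 1, y 2, y 0] = c' • y) :
    F₁ x t ≠ 0 ∨ F₂ lam₁ lam₂ lam₃ t y ≠ 0 := by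
  by_contra h
  push_neg at h
  obtain ⟨hF1, hF2⟩ := h
  obtain ⟨hx0, hxs, hxp⟩ := cyc_struct x hx hfx
  obtain ⟨hy0, hys, hyp⟩ := cyc_struct y hy hfy
  rw [F₁, hxs, hxp] at hF1
  rw [F₂, hys, hyp] at hF2
  -- hF1 : x0³ (3 t0 + t1) = 0
  have ht01 : 3 * t 0 + t 1 = 0 := by
    have hx03 : x 0 ^ 3 ≠ 0 := pow_ne_zero _ hx0
    have : x 0 ^ 3 * (3 * t 0 + t 1) = 0 := by linear_combination hF1
    rcases mul_eq_zero.mp this with h' | h'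
    · exact absurd h' hx03
    · exact h'
  have ht02 : (3 * lam₁ + lam₂) * t 0 + (3 + lam₃) * t 1 = 0 := by
    have hy03 : y 0 ^ 3 ≠ 0 := pow_ne_zero _ hy0
    have : y 0 ^ 3 * ((3 * lam₁ + lam₂) * t 0 + (3 + lam₃) * t 1) = 0 := by
      linear_combination hF2
    rcases mul_eq_zero.mp this with h' | h'
    · exact absurd h' hy03
    · exact h'
  have ht0 : t 0 ≠ 0 := by
    intro h0
    apply ht
    have h1 : t 1 = 0 := by linear_combination ht01 - 3 * h0
    funext i
    fin_cases i <;> simp [h0, h1]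
  apply hlam
  have key : (3 * lam₁ + lam₂ - 3 * lam₃ - 9) * t 0 = 0 := by
    linear_combination ht02 - (3 + lam₃) * ht01
  rcases mul_eq_zero.mp key with h' | h'
  · linear_combination h'
  · exact absurd h' ht0
end

section
/- The set of integer lattice points of the polytope ∇*, i.e. the set of v ∈ ℤ⁵ whose image in ℝ⁵ lies in the convex hull of {ν₁,…,ν₁₂}, is exactly the union of: the origin 0; the twelve vertices ν₁,…,ν₁₂; the two points −e₃ and e₃; and the 24 points (ν₍₃ₖ₊ᵢ₎ + 2ν₍₃ₖ₊ⱼ₎)/3 for k ∈ {0,1,2,3} and ordered pairs (i,j) with i,j ∈ {1,2,3}, i ≠ j (each of which is an integer vector). In particular, ∇* has exactly 39 lattice points. -/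
/-!
Every vertex of `∇*` satisfies fifteen linear inequalities `⟨n, x⟩ ≤ 1`, built from the facet
normals of the triangle `conv{(2,-1), (-1,2), (-1,-1)}` that each triple `ν_{3k+1}, ν_{3k+2},
ν_{3k+3}` projects onto, so `∇*` lies in their intersection. For a lattice point these
inequalities force every coordinate into `{-1, 0, 1, 2}`, and exactly 39 points of that box
satisfy them. Each of the 39 is a barycentre `(ν_a + ν_b + ν_c) / 3` of three (not necessarily
distinct) vertices, hence lies in `∇*`.
-/

/-- The vertices `ν₁,…,ν₁₂` of the mirror polytope `∇*`, as elements of `ℤ⁵`. -/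
def nuN5 : Fin 12 → (Fin 5 → ℤ) :=
  ![![2, -1, 0, 0, 0],
    ![-1, 2, 0, 0, 0],
    ![-1, -1, 0, 0, 0],
    ![2, -1, -1, 0, 0],
    ![-1, 2, -1, 0, 0],
    ![-1, -1, -1, 0, 0],
    ![0, 0, 0, 2, -1],
    ![0, 0, 0, -1, 2],
    ![0, 0, 0, -1, -1],
    ![0, 0, 1, 2, -1],
    ![0, 0, 1, -1, 2],
    ![0, 0, 1, -1, -1]]

/-- The vertex `ν_{3k+i}` for `k ∈ {0,1,2,3}` and `i ∈ {1,2,3}` (0-based `i`). -/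
def nuIdx (k : Fin 4) (i : Fin 3) : Fin 12 := ⟨3 * k.val + i.val, by omega⟩

/-- The real points of `∇*`: the convex hull in `ℝ⁵` of the vertices `ν₁,…,ν₁₂`. -/
noncomputable def NablaStar : Set (Fin 5 → ℝ) :=
  convexHull ℝ (Set.range (fun j => fun i => ((nuN5 j i : ℤ) : ℝ)))

open Matrix Set

theorem dotProduct_le_of_intCast_mem_convexHull {ι α : Type*} [Fintype α] {p : ι → α → ℤ}
    {n : α → ℤ} {c : ℤ} (hp : ∀ i, n ⬝ᵥ p i ≤ c) {v : α → ℤ}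
    (hv : (fun t => (v t : ℝ)) ∈ convexHull ℝ (range fun i t => (p i t : ℝ))) :
    n ⬝ᵥ v ≤ c := by
  have hcast (w : α → ℤ) : ((n ⬝ᵥ w : ℤ) : ℝ) = (fun t => (n t : ℝ)) ⬝ᵥ fun t => (w t : ℝ) :=
    RingHom.map_dotProduct (Int.castRingHom ℝ) n w
  have hull : convexHull ℝ (range fun i t => (p i t : ℝ)) ⊆
      {x | (fun t => (n t : ℝ)) ⬝ᵥ x ≤ c} := by
    refine convexHull_min ?_ (convex_halfSpace_le (dotProductBilin ℝ ℝ _).isLinear _)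
    rintro _ ⟨i, rfl⟩
    rw [mem_ofPred_eq, ← hcast]
    exact_mod_cast hp i
  have := hull hv
  rw [mem_ofPred_eq, ← hcast] at this
  exact_mod_cast this

theorem intCast_mem_convexHull_of_card_nsmul_eq_sum {ι κ α : Type*} [Fintype κ] [Nonempty κ]
    (p : ι → α → ℤ) (q : κ → ι) {v : α → ℤ} (hv : Fintype.card κ • v = ∑ k, p (q k)) :
    (fun t => (v t : ℝ)) ∈ convexHull ℝ (range fun i t => (p i t : ℝ)) := by
  have hcenter : (fun t => (v t : ℝ)) =
      Finset.univ.centerMass (fun _ => (1 : ℝ)) fun k t => (p (q k) t : ℝ) := by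
    funext t
    have ht : (Fintype.card κ : ℝ) * v t = ∑ k, (p (q k) t : ℝ) := by
      have h := congrFun hv t
      simp only [Pi.smul_apply, Finset.sum_apply, nsmul_eq_mul] at h
      exact_mod_cast h
    simp [Finset.centerMass, ← ht]
  rw [hcenter]
  exact Finset.centerMass_mem_convexHull _ (fun _ _ => zero_le_one)
    (by simpa using Fintype.card_pos) (fun k _ => ⟨q k, rfl⟩)

-- With `u, w` among the facet normals `(-1,0), (0,-1), (1,1)` of the triangle, the rows are
-- the concatenations `(u, 0, w)`, then `(u, 1, 0, 0)`, then `(0, 0, -1, w)`.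
def nablaStarFacetNormal : Fin 15 → Fin 5 → ℤ :=
  ![![-1, 0, 0, -1, 0], ![-1, 0, 0, 0, -1], ![-1, 0, 0, 1, 1],
    ![0, -1, 0, -1, 0], ![0, -1, 0, 0, -1], ![0, -1, 0, 1, 1],
    ![1, 1, 0, -1, 0], ![1, 1, 0, 0, -1], ![1, 1, 0, 1, 1],
    ![-1, 0, 1, 0, 0], ![0, -1, 1, 0, 0], ![1, 1, 1, 0, 0],
    ![0, 0, -1, -1, 0], ![0, 0, -1, 0, -1], ![0, 0, -1, 1, 1]]

theorem nablaStarFacetNormal_dotProduct_nuN5_le_one (k : Fin 15) (j : Fin 12) :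
    nablaStarFacetNormal k ⬝ᵥ nuN5 j ≤ 1 := by
  revert k j; decide

def nablaStarBox : Finset (Fin 5 → ℤ) := Fintype.piFinset fun _ => {-1, 0, 1, 2}

theorem mem_nablaStarBox_of_dotProduct_le_one {v : Fin 5 → ℤ}
    (hv : ∀ k, nablaStarFacetNormal k ⬝ᵥ v ≤ 1) : v ∈ nablaStarBox := by
  simp only [Fin.forall_fin_succ, nablaStarFacetNormal, dotProduct, Fin.sum_univ_five, Fin.isValue,
    cons_val, cons_val_zero, cons_val_one, cons_val_succ, IsEmpty.forall_iff] at hv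
  simp only [nablaStarBox, Fintype.mem_piFinset, Finset.mem_insert, Finset.mem_singleton]
  intro t
  fin_cases t <;> dsimp <;> omega

def nablaStarLatticePoints : Finset (Fin 5 → ℤ) :=
  nablaStarBox.filter fun v => ∀ k, nablaStarFacetNormal k ⬝ᵥ v ≤ 1

theorem mem_nablaStarLatticePoints_of_intCast_mem {v : Fin 5 → ℤ}
    (hv : (fun i => ((v i : ℤ) : ℝ)) ∈ NablaStar) : v ∈ nablaStarLatticePoints := by
  have hfacet (k : Fin 15) : nablaStarFacetNormal k ⬝ᵥ v ≤ 1 :=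
    dotProduct_le_of_intCast_mem_convexHull (nablaStarFacetNormal_dotProduct_nuN5_le_one k) hv
  exact Finset.mem_filter.2 ⟨mem_nablaStarBox_of_dotProduct_le_one hfacet, hfacet⟩

def nablaStarLatticeDescription : Set (Fin 5 → ℤ) :=
  (({0} ∪ range nuN5) ∪ {![0, 0, -1, 0, 0], ![0, 0, 1, 0, 0]}) ∪
    {p : Fin 5 → ℤ | ∃ (k : Fin 4) (i j : Fin 3), i ≠ j ∧
      (3 : ℤ) • p = nuN5 (nuIdx k i) + (2 : ℤ) • nuN5 (nuIdx k j)}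

set_option maxRecDepth 100000 in
theorem nablaStarLatticePoints_subset_description :
    ∀ v ∈ nablaStarLatticePoints, v ∈ nablaStarLatticeDescription := by
  simp only [nablaStarLatticeDescription, mem_union, mem_singleton_iff, mem_insert_iff,
    mem_range, mem_ofPred_eq]
  decide

theorem intCast_mem_nablaStar_of_mem_description {v : Fin 5 → ℤ}
    (hv : v ∈ nablaStarLatticeDescription) : (fun i => ((v i : ℤ) : ℝ)) ∈ NablaStar := by
  rcases hv with ((rfl | ⟨j, rfl⟩) | (rfl | rfl)) | ⟨k, i, j, -, hp⟩
  · exact intCast_mem_convexHull_of_card_nsmul_eq_sum nuN5 ![0, 1, 2] (by decide)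
  · exact subset_convexHull ℝ _ ⟨j, rfl⟩
  · exact intCast_mem_convexHull_of_card_nsmul_eq_sum nuN5 ![3, 4, 5] (by decide)
  · exact intCast_mem_convexHull_of_card_nsmul_eq_sum nuN5 ![9, 10, 11] (by decide)
  · refine intCast_mem_convexHull_of_card_nsmul_eq_sum nuN5 ![nuIdx k i, nuIdx k j, nuIdx k j] ?_
    simpa [Fin.sum_univ_three, two_mul, add_assoc] using hp

theorem setOf_intCast_mem_nablaStar :
    {v : Fin 5 → ℤ | (fun i => ((v i : ℤ) : ℝ)) ∈ NablaStar} = nablaStarLatticePoints :=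
  Subset.antisymm (fun _ => mem_nablaStarLatticePoints_of_intCast_mem) fun v hv =>
    intCast_mem_nablaStar_of_mem_description (nablaStarLatticePoints_subset_description v hv)

set_option maxRecDepth 100000 in
theorem card_nablaStarLatticePoints : nablaStarLatticePoints.card = 39 := by decide

theorem nuN5_nuIdx_modEq (k : Fin 4) (i j : Fin 3) (t : Fin 5) :
    nuN5 (nuIdx k i) t ≡ nuN5 (nuIdx k j) t [ZMOD 3] := by
  revert k i j t; decide

theorem exists_three_smul_eq (k : Fin 4) (i j : Fin 3) :
    ∃ p : Fin 5 → ℤ, (3 : ℤ) • p = nuN5 (nuIdx k i) + (2 : ℤ) • nuN5 (nuIdx k j) := by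
  have hdvd (t : Fin 5) : (3 : ℤ) ∣ nuN5 (nuIdx k i) t + 2 * nuN5 (nuIdx k j) t := by
    have h := (nuN5_nuIdx_modEq k i j t).dvd
    rw [show nuN5 (nuIdx k i) t + 2 * nuN5 (nuIdx k j) t =
      3 * nuN5 (nuIdx k j) t - (nuN5 (nuIdx k j) t - nuN5 (nuIdx k i) t) by ring]
    exact dvd_sub (dvd_mul_right _ _) h
  choose p hp using hdvd
  exact ⟨p, funext fun t => by simp [hp t]⟩

/-- **`∇*` has exactly 39 lattice points.**
The lattice points of `∇*` are: the origin; the twelve vertices `ν₁,…,ν₁₂`; the two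
points `±e₃`; and the 24 integer points `(ν_{3k+i} + 2ν_{3k+j})/3` for `k ∈ {0,1,2,3}`
and ordered pairs `i ≠ j` in `{1,2,3}` — each of which is indeed an integer vector. -/
theorem lattice_points_NablaStar :
    ({v : Fin 5 → ℤ | (fun i => ((v i : ℤ) : ℝ)) ∈ NablaStar} =
      (({0} ∪ Set.range nuN5) ∪ {![0, 0, -1, 0, 0], ![0, 0, 1, 0, 0]}) ∪
        {p : Fin 5 → ℤ | ∃ (k : Fin 4) (i j : Fin 3), i ≠ j ∧
          (3 : ℤ) • p = nuN5 (nuIdx k i) + (2 : ℤ) • nuN5 (nuIdx k j)}) ∧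
    (∀ (k : Fin 4) (i j : Fin 3), i ≠ j →
      ∃ p : Fin 5 → ℤ, (3 : ℤ) • p = nuN5 (nuIdx k i) + (2 : ℤ) • nuN5 (nuIdx k j)) ∧
    Set.ncard {v : Fin 5 → ℤ | (fun i => ((v i : ℤ) : ℝ)) ∈ NablaStar} = 39 := by
  rw [setOf_intCast_mem_nablaStar]
  refine ⟨Subset.antisymm nablaStarLatticePoints_subset_description fun v hv => ?_,
    fun k i j _ => exists_three_smul_eq k i j,
    by rw [ncard_coe_finset, card_nablaStarLatticePoints]⟩
  exact mem_nablaStarLatticePoints_of_intCast_mem (intCast_mem_nablaStar_of_mem_description hv)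
end

section
/- The set of integer lattice points of the polytope Δ̄*, i.e. the set of v ∈ ℤ⁵ whose image in ℝ⁵ lies in the convex hull of {ρ̄₁,…,ρ̄₈}, is exactly {0, ρ̄₁, ρ̄₂, ρ̄₃, ρ̄₄, ρ̄₅, ρ̄₆, ρ̄₇, ρ̄₈}; that is, Δ̄* has no lattice points other than the origin and its eight vertices (the condition guaranteeing that the ℤ₃-quotient X̄ = X̃/G₁ is free). -/
/-- The vertices `ρ̄₁,…,ρ̄₈` of the polytope `Δ̄*` describing the partial quotient
`X̄ = X̃/ℤ₃`, as elements of `ℤ⁵`. -/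
def rhobar : Fin 8 → (Fin 5 → ℤ) :=
  ![![1, 0, 0, 0, 0],
    ![0, 1, 0, 0, 0],
    ![-1, -1, 0, 0, 0],
    ![0, 0, 1, 0, 0],
    ![0, 0, -1, 0, 0],
    ![0, 0, 0, 1, 0],
    ![1, 2, 0, 1, 3],
    ![-1, -2, 0, -2, -3]]

/-- The real points of `Δ̄*`: the convex hull in `ℝ⁵` of the vertices `ρ̄₁,…,ρ̄₈`. -/
noncomputable def DeltabarStar : Set (Fin 5 → ℝ) :=
  convexHull ℝ (Set.range (fun j => fun i => ((rhobar j i : ℤ) : ℝ)))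

/-- Any linear inequality valid on the vertices is valid on the integer points of the hull. -/
lemma facet (a : Fin 5 → ℤ) (b : ℤ) (h : ∀ j : Fin 8, ∑ i, a i * rhobar j i ≤ b)
    (v : Fin 5 → ℤ) (hv : (fun i => ((v i : ℤ) : ℝ)) ∈ DeltabarStar) :
    ∑ i, a i * v i ≤ b := by
  have hlin : IsLinearMap ℝ (fun x : Fin 5 → ℝ => ∑ i, (a i : ℝ) * x i) := by
    constructor
    · intro x y; simp [mul_add, Finset.sum_add_distrib]
    · intro c x; simp [Finset.mul_sum]; ring_nf; simp [mul_comm, mul_left_comm]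
  have hconv : Convex ℝ {x : Fin 5 → ℝ | ∑ i, (a i : ℝ) * x i ≤ (b : ℝ)} :=
    convex_halfSpace_le hlin (b : ℝ)
  have hsub : DeltabarStar ⊆ {x | ∑ i, (a i : ℝ) * x i ≤ (b : ℝ)} := by
    apply convexHull_min _ hconv
    rintro _ ⟨j, rfl⟩
    simp only [Set.mem_setOf_eq]
    exact_mod_cast h j
  have := hsub hv
  simp only [Set.mem_setOf_eq] at this
  exact_mod_cast this

/-- Integer solutions of the facet inequalities of `Δ̄*`. -/
theorem key_lemma (a b c d e : ℤ)
 (f1 : -2*a+b-c-2*d+e ≤ 1) (f2 : -2*a+b-c+d-e ≤ 1) (f3 : -2*a+b-c+d ≤ 1)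
 (f4 : -2*a+b+c-2*d+e ≤ 1) (f5 : -2*a+b+c+d-e ≤ 1) (f6 : -2*a+b+c+d ≤ 1)
 (f7 : a-2*b-c-2*d+2*e ≤ 1) (f8 : a-2*b-c+d ≤ 1) (f9 : a-2*b-c+d+e ≤ 1)
 (f10 : a-2*b+c-2*d+2*e ≤ 1) (f11 : a-2*b+c+d ≤ 1) (f12 : a-2*b+c+d+e ≤ 1)
 (f13 : a+b-c-2*d ≤ 1) (f14 : a+b-c+d-2*e ≤ 1) (f15 : a+b-c+d-e ≤ 1)
 (f16 : a+b+c-2*d ≤ 1) (f17 : a+b+c+d-2*e ≤ 1) (f18 : a+b+c+d-e ≤ 1) :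
 (a=0∧b=0∧c=0∧d=0∧e=0)∨(a=1∧b=0∧c=0∧d=0∧e=0)∨(a=0∧b=1∧c=0∧d=0∧e=0)∨
 (a=-1∧b=-1∧c=0∧d=0∧e=0)∨(a=0∧b=0∧c=1∧d=0∧e=0)∨(a=0∧b=0∧c=-1∧d=0∧e=0)∨
 (a=0∧b=0∧c=0∧d=1∧e=0)∨(a=1∧b=2∧c=0∧d=1∧e=3)∨(a=-1∧b=-2∧c=0∧d=-2∧e=-3) := by
  have hc : c = -1 ∨ c = 0 ∨ c = 1 := by omega
  rcases hc with hc|hc|hc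
  · have h : a = 0 ∧ b = 0 ∧ d = 0 ∧ e = 0 := by omega
    exact Or.inr <| Or.inr <| Or.inr <| Or.inr <| Or.inr <| Or.inl ⟨h.1, h.2.1, hc, h.2.2⟩
  · have hd : d = -2 ∨ d = -1 ∨ d = 0 ∨ d = 1 := by omega
    rcases hd with hd|hd|hd|hd
    · have h : a = -1 ∧ b = -2 ∧ e = -3 := by omega
      exact Or.inr <| Or.inr <| Or.inr <| Or.inr <| Or.inr <| Or.inr <| Or.inr <| Or.inr
        ⟨h.1, h.2.1, hc, hd, h.2.2⟩
    · exfalso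
      have ha : a = -1 ∨ a = 0 ∨ a = 1 := by omega
      have hb : b = -2 ∨ b = -1 ∨ b = 0 ∨ b = 1 ∨ b = 2 := by omega
      rcases ha with h|h|h <;> rcases hb with h'|h'|h'|h'|h' <;> omega
    · have ha : a = -1 ∨ a = 0 ∨ a = 1 := by omega
      rcases ha with ha|ha|ha
      · have h : b = -1 ∧ e = 0 := by omega
        exact Or.inr <| Or.inr <| Or.inr <| Or.inl ⟨ha, h.1, hc, hd, h.2⟩
      · have hb : b = 0 ∨ b = 1 := by omega
        rcases hb with hb|hb
        · have h : e = 0 := by omega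
          exact Or.inl ⟨ha, hb, hc, hd, h⟩
        · have h : e = 0 := by omega
          exact Or.inr <| Or.inr <| Or.inl ⟨ha, hb, hc, hd, h⟩
      · have h : b = 0 ∧ e = 0 := by omega
        exact Or.inr <| Or.inl ⟨ha, h.1, hc, hd, h.2⟩
    · have ha : a = 0 ∨ a = 1 := by omega
      rcases ha with ha|ha
      · have h : b = 0 ∧ e = 0 := by omega
        exact Or.inr <| Or.inr <| Or.inr <| Or.inr <| Or.inr <| Or.inr <| Or.inl
          ⟨ha, h.1, hc, hd, h.2⟩
      · have h : b = 2 ∧ e = 3 := by omega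
        exact Or.inr <| Or.inr <| Or.inr <| Or.inr <| Or.inr <| Or.inr <| Or.inr <| Or.inl
          ⟨ha, h.1, hc, hd, h.2⟩
  · have h : a = 0 ∧ b = 0 ∧ d = 0 ∧ e = 0 := by omega
    exact Or.inr <| Or.inr <| Or.inr <| Or.inr <| Or.inl ⟨h.1, h.2.1, hc, h.2.2⟩

/-- **`Δ̄*` has no lattice points besides the origin and its vertices.**
The set of `v ∈ ℤ⁵` lying (after inclusion into `ℝ⁵`) in the convex hull of
`{ρ̄₁,…,ρ̄₈}` is exactly `{0, ρ̄₁, …, ρ̄₈}` — the condition guaranteeing that the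
`ℤ₃`-quotient `X̄ = X̃/G₁` is free. -/
theorem lattice_points_DeltabarStar :
    {v : Fin 5 → ℤ | (fun i => ((v i : ℤ) : ℝ)) ∈ DeltabarStar} =
      {0} ∪ Set.range rhobar := by
  ext v
  simp only [Set.mem_setOf_eq, Set.mem_union, Set.mem_singleton_iff, Set.mem_range]
  constructor
  · intro hv
    have f1 := facet ![-2,1,-1,-2,1] 1 (by decide) v hv
    have f2 := facet ![-2,1,-1,1,-1] 1 (by decide) v hv
    have f3 := facet ![-2,1,-1,1,0] 1 (by decide) v hv
    have f4 := facet ![-2,1,1,-2,1] 1 (by decide) v hv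
    have f5 := facet ![-2,1,1,1,-1] 1 (by decide) v hv
    have f6 := facet ![-2,1,1,1,0] 1 (by decide) v hv
    have f7 := facet ![1,-2,-1,-2,2] 1 (by decide) v hv
    have f8 := facet ![1,-2,-1,1,0] 1 (by decide) v hv
    have f9 := facet ![1,-2,-1,1,1] 1 (by decide) v hv
    have f10 := facet ![1,-2,1,-2,2] 1 (by decide) v hv
    have f11 := facet ![1,-2,1,1,0] 1 (by decide) v hv
    have f12 := facet ![1,-2,1,1,1] 1 (by decide) v hv
    have f13 := facet ![1,1,-1,-2,0] 1 (by decide) v hv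
    have f14 := facet ![1,1,-1,1,-2] 1 (by decide) v hv
    have f15 := facet ![1,1,-1,1,-1] 1 (by decide) v hv
    have f16 := facet ![1,1,1,-2,0] 1 (by decide) v hv
    have f17 := facet ![1,1,1,1,-2] 1 (by decide) v hv
    have f18 := facet ![1,1,1,1,-1] 1 (by decide) v hv
    simp only [Fin.sum_univ_five, Matrix.cons_val_zero, Matrix.cons_val_one, Matrix.head_cons,
      Matrix.cons_val_two, Matrix.tail_cons, Matrix.cons_val_three, Matrix.cons_val_four]
      at f1 f2 f3 f4 f5 f6 f7 f8 f9 f10 f11 f12 f13 f14 f15 f16 f17 f18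
    have key := key_lemma (v 0) (v 1) (v 2) (v 3) (v 4)
      (by omega) (by omega) (by omega) (by omega) (by omega) (by omega)
      (by omega) (by omega) (by omega) (by omega) (by omega) (by omega)
      (by omega) (by omega) (by omega) (by omega) (by omega) (by omega)
    have hfun : ∀ (a b c d e : ℤ), v 0 = a → v 1 = b → v 2 = c → v 3 = d → v 4 = e →
        v = ![a,b,c,d,e] := by
      intro a b c d e h0 h1 h2 h3 h4
      funext i; fin_cases i <;> simpa
    rcases key with ⟨h0,h1,h2,h3,h4⟩|⟨h0,h1,h2,h3,h4⟩|⟨h0,h1,h2,h3,h4⟩|⟨h0,h1,h2,h3,h4⟩|⟨h0,h1,h2,h3,h4⟩|⟨h0,h1,h2,h3,h4⟩|⟨h0,h1,h2,h3,h4⟩|⟨h0,h1,h2,h3,h4⟩|⟨h0,h1,h2,h3,h4⟩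
    · left
      rw [hfun 0 0 0 0 0 h0 h1 h2 h3 h4]
      funext i; fin_cases i <;> rfl
    · exact Or.inr ⟨0, (hfun 1 0 0 0 0 h0 h1 h2 h3 h4).symm⟩
    · exact Or.inr ⟨1, (hfun 0 1 0 0 0 h0 h1 h2 h3 h4).symm⟩
    · exact Or.inr ⟨2, (hfun (-1) (-1) 0 0 0 h0 h1 h2 h3 h4).symm⟩
    · exact Or.inr ⟨3, (hfun 0 0 1 0 0 h0 h1 h2 h3 h4).symm⟩
    · exact Or.inr ⟨4, (hfun 0 0 (-1) 0 0 h0 h1 h2 h3 h4).symm⟩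
    · exact Or.inr ⟨5, (hfun 0 0 0 1 0 h0 h1 h2 h3 h4).symm⟩
    · exact Or.inr ⟨6, (hfun 1 2 0 1 3 h0 h1 h2 h3 h4).symm⟩
    · exact Or.inr ⟨7, (hfun (-1) (-2) 0 (-2) (-3) h0 h1 h2 h3 h4).symm⟩
  · rintro (rfl | ⟨j, rfl⟩)
    · have hmem : ∀ j : Fin 8, (fun i => ((rhobar j i : ℤ) : ℝ)) ∈ DeltabarStar := fun j =>
        subset_convexHull ℝ _ ⟨j, rfl⟩
      have hc : Convex ℝ DeltabarStar := convex_convexHull ℝ _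
      have hm : (1/2 : ℝ) • (fun i => ((rhobar 0 i : ℤ) : ℝ)) +
          (1/2 : ℝ) • (fun i => ((rhobar 1 i : ℤ) : ℝ)) ∈ DeltabarStar :=
        hc (hmem 0) (hmem 1) (by norm_num) (by norm_num) (by norm_num)
      have h0 : (2/3 : ℝ) • ((1/2 : ℝ) • (fun i => ((rhobar 0 i : ℤ) : ℝ)) +
          (1/2 : ℝ) • (fun i => ((rhobar 1 i : ℤ) : ℝ))) +
          (1/3 : ℝ) • (fun i => ((rhobar 2 i : ℤ) : ℝ)) ∈ DeltabarStar :=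
        hc hm (hmem 2) (by norm_num) (by norm_num) (by norm_num)
      convert h0 using 1
      funext i
      fin_cases i <;> simp [rhobar] <;> norm_num
    · exact subset_convexHull ℝ _ ⟨j, rfl⟩
end

section
/- The set of integer lattice points of the polytope ∇̄*, i.e. the set of v ∈ ℤ⁵ whose image in ℝ⁵ lies in the convex hull of {ν̄₁,…,ν̄₁₂}, is exactly {0, ν̄₁, …, ν̄₁₂, −e₃, e₃}; that is, ∇̄* has exactly 15 lattice points: the origin, its 12 vertices, and the two points ν̄₁₃ = −e₃ and ν̄₁₄ = e₃. -/
/-- The vertices `ν̄₁,…,ν̄₁₂` of the polytope `∇̄*` (the ambient polytope of the mirror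
`X̄*` of the partial quotient `X̄`), as elements of `ℤ⁵`. -/
def nubar : Fin 12 → (Fin 5 → ℤ) :=
  ![![2, -1, 0, 0, 0],
    ![-1, 2, 0, 0, -1],
    ![-1, -1, 0, 0, 1],
    ![2, -1, -1, 0, 0],
    ![-1, 2, -1, 0, -1],
    ![-1, -1, -1, 0, 1],
    ![0, 0, 0, 2, -1],
    ![0, 0, 0, -1, 1],
    ![0, 0, 0, -1, 0],
    ![0, 0, 1, 2, -1],
    ![0, 0, 1, -1, 1],
    ![0, 0, 1, -1, 0]]

/-- The real points of `∇̄*`: the convex hull in `ℝ⁵` of the vertices `ν̄₁,…,ν̄₁₂`. -/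
noncomputable def NablabarStar : Set (Fin 5 → ℝ) :=
  convexHull ℝ (Set.range (fun j => fun i => ((nubar j i : ℤ) : ℝ)))

lemma halfspace_bound (a : Fin 5 → ℝ) (b : ℝ)
    (h : ∀ j : Fin 12, ∑ i, a i * ((nubar j i : ℤ) : ℝ) ≤ b)
    {x : Fin 5 → ℝ} (hx : x ∈ NablabarStar) : ∑ i, a i * x i ≤ b := by
  have hlin : IsLinearMap ℝ (fun x : Fin 5 → ℝ => ∑ i, a i * x i) := by
    constructor
    · intro x y; simp [mul_add, Finset.sum_add_distrib]
    · intro c x; simp [Finset.mul_sum, mul_left_comm]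
  have hconv : Convex ℝ {x : Fin 5 → ℝ | ∑ i, a i * x i ≤ b} :=
    convex_halfSpace_le hlin b
  exact convexHull_min (by rintro _ ⟨j, rfl⟩; exact h j) hconv hx

lemma combo3 (j1 j2 j3 : Fin 12) :
    (fun i => (((nubar j1 i + nubar j2 i + nubar j3 i : ℤ) : ℝ)) / 3) ∈ NablabarStar := by
  have hc : Convex ℝ NablabarStar := convex_convexHull ℝ _
  have h1 : (fun i => ((nubar j1 i : ℤ) : ℝ)) ∈ NablabarStar :=
    subset_convexHull ℝ _ ⟨j1, rfl⟩
  have h2 : (fun i => ((nubar j2 i : ℤ) : ℝ)) ∈ NablabarStar :=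
    subset_convexHull ℝ _ ⟨j2, rfl⟩
  have h3 : (fun i => ((nubar j3 i : ℤ) : ℝ)) ∈ NablabarStar :=
    subset_convexHull ℝ _ ⟨j3, rfl⟩
  have hm : (1/2 : ℝ) • (fun i => ((nubar j1 i : ℤ) : ℝ)) +
      (1/2 : ℝ) • (fun i => ((nubar j2 i : ℤ) : ℝ)) ∈ NablabarStar :=
    hc h1 h2 (by norm_num) (by norm_num) (by norm_num)
  have key : (2/3 : ℝ) • ((1/2 : ℝ) • (fun i => ((nubar j1 i : ℤ) : ℝ)) +
      (1/2 : ℝ) • (fun i => ((nubar j2 i : ℤ) : ℝ))) +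
      (1/3 : ℝ) • (fun i => ((nubar j3 i : ℤ) : ℝ)) ∈ NablabarStar :=
    hc hm h3 (by norm_num) (by norm_num) (by norm_num)
  convert key using 1
  funext i
  simp only [Pi.smul_apply, Pi.add_apply, smul_eq_mul]
  push_cast
  ring

lemma scalar_bound (a0 a1 a2 a3 a4 b : ℤ)
    (h : ∀ j : Fin 12, a0 * nubar j 0 + a1 * nubar j 1 + a2 * nubar j 2 + a3 * nubar j 3
      + a4 * nubar j 4 ≤ b)
    {v : Fin 5 → ℤ} (hv : (fun i => ((v i : ℤ) : ℝ)) ∈ NablabarStar) :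
    a0 * v 0 + a1 * v 1 + a2 * v 2 + a3 * v 3 + a4 * v 4 ≤ b := by
  have hr := halfspace_bound ![(a0 : ℝ), a1, a2, a3, a4] (b : ℝ) (fun j => by
    rw [Fin.sum_univ_five]
    simp only [Matrix.cons_val_zero, Matrix.cons_val_one, Matrix.head_cons,
      Matrix.cons_val_two, Matrix.tail_cons, Matrix.cons_val_three, Matrix.cons_val_four]
    exact_mod_cast h j) hv
  rw [Fin.sum_univ_five] at hr
  simp only [Matrix.cons_val_zero, Matrix.cons_val_one, Matrix.head_cons,
    Matrix.cons_val_two, Matrix.tail_cons, Matrix.cons_val_three, Matrix.cons_val_four] at hr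
  exact_mod_cast hr

set_option synthInstance.maxHeartbeats 1000000 in
set_option synthInstance.maxSize 2000 in
set_option maxHeartbeats 1000000 in
lemma enum_lattice : ∀ a ∈ Finset.Icc (-1:ℤ) 2, ∀ b ∈ Finset.Icc (-1:ℤ) 2,
    ∀ c ∈ Finset.Icc (-1:ℤ) 1, ∀ d ∈ Finset.Icc (-1:ℤ) 2, ∀ e ∈ Finset.Icc (-1:ℤ) 1,
    ((-2)*a + (-2)*b + 0*c + (-1)*d + (-3)*e ≤ 1 ∧ (-1)*a + (-3)*b + 0*c + (-1)*d + (-3)*e ≤ 1 ∧ (-1)*a + (-2)*b + (-1)*c + (-1)*d + (-3)*e ≤ 1 ∧ (-1)*a + 0*b + 0*c + (-1)*d + 0*e ≤ 1 ∧ (-1)*a + 0*b + 1*c + 0*d + 0*e ≤ 1 ∧ 0*a + (-1)*b + 0*c + (-1)*d + (-3)*e ≤ 1 ∧ 0*a + (-1)*b + 0*c + (-1)*d + 0*e ≤ 1 ∧ 0*a + (-1)*b + 1*c + 0*d + 0*e ≤ 1 ∧ 0*a + 0*b + (-1)*c + (-1)*d + 0*e ≤ 1 ∧ 0*a + 2*b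 + 0*c + 2*d + 3*e ≤ 1 ∧ 1*a + 1*b + 0*c + (-1)*d + 0*e ≤ 1 ∧ 1*a + 1*b + 0*c + 2*d + 3*e ≤ 1 ∧ 1*a + 1*b + 1*c + 0*d + 0*e ≤ 1 ∧ 1*a + 2*b + (-1)*c + 2*d + 3*e ≤ 1 ∧ 2*a + 3*b + 0*c + 2*d + 3*e ≤ 1) →
    ((a = 2 ∧ b = (-1) ∧ c = 0 ∧ d = 0 ∧ e = 0) ∨ (a = (-1) ∧ b = 2 ∧ c = 0 ∧ d = 0 ∧ e = (-1)) ∨ (a = (-1) ∧ b = (-1) ∧ c = 0 ∧ d = 0 ∧ e = 1) ∨ (a = 2 ∧ b = (-1) ∧ c = (-1) ∧ d = 0 ∧ e = 0) ∨ (a = (-1) ∧ b = 2 ∧ c = (-1) ∧ d = 0 ∧ e = (-1)) ∨ (a = (-1) ∧ b = (-1) ∧ c = (-1) ∧ d = 0 ∧ e = 1) ∨ (a = 0 ∧ b = 0 ∧ c = 0 ∧ d = 2 ∧ e = (-1)) ∨ (a = 0 ∧ b = 0 ∧ c = 0 ∧ d = (-1) ∧ e = 1) ∨ (a = 0 ∧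 b = 0 ∧ c = 0 ∧ d = (-1) ∧ e = 0) ∨ (a = 0 ∧ b = 0 ∧ c = 1 ∧ d = 2 ∧ e = (-1)) ∨ (a = 0 ∧ b = 0 ∧ c = 1 ∧ d = (-1) ∧ e = 1) ∨ (a = 0 ∧ b = 0 ∧ c = 1 ∧ d = (-1) ∧ e = 0) ∨ (a = 0 ∧ b = 0 ∧ c = 0 ∧ d = 0 ∧ e = 0) ∨ (a = 0 ∧ b = 0 ∧ c = (-1) ∧ d = 0 ∧ e = 0) ∨ (a = 0 ∧ b = 0 ∧ c = 1 ∧ d = 0 ∧ e = 0)) := by decide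

lemma funext5 {v : Fin 5 → ℤ} {a b c d e : ℤ} (h0 : v 0 = a) (h1 : v 1 = b)
    (h2 : v 2 = c) (h3 : v 3 = d) (h4 : v 4 = e) : v = ![a, b, c, d, e] := by
  funext i; fin_cases i <;> simpa

set_option maxHeartbeats 2000000 in
/-- **`∇̄*` has exactly 15 lattice points.**
The set of `v ∈ ℤ⁵` lying (after inclusion into `ℝ⁵`) in the convex hull of
`{ν̄₁,…,ν̄₁₂}` is exactly the origin, the 12 vertices, and the two points
`ν̄₁₃ = −e₃` and `ν̄₁₄ = e₃`. -/
theorem lattice_points_NablabarStar :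
    {v : Fin 5 → ℤ | (fun i => ((v i : ℤ) : ℝ)) ∈ NablabarStar} =
      ({0} ∪ Set.range nubar) ∪ {![0, 0, -1, 0, 0], ![0, 0, 1, 0, 0]} := by
  ext v
  simp only [Set.mem_setOf_eq, Set.mem_union, Set.mem_singleton_iff, Set.mem_range,
    Set.mem_insert_iff]
  constructor
  · intro hv
    have h1 := scalar_bound (-2) (-2) 0 (-1) (-3) 1 (by decide) hv
    have h2 := scalar_bound (-1) (-3) 0 (-1) (-3) 1 (by decide) hv
    have h3 := scalar_bound (-1) (-2) (-1) (-1) (-3) 1 (by decide) hv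
    have h4 := scalar_bound (-1) 0 0 (-1) 0 1 (by decide) hv
    have h5 := scalar_bound (-1) 0 1 0 0 1 (by decide) hv
    have h6 := scalar_bound 0 (-1) 0 (-1) (-3) 1 (by decide) hv
    have h7 := scalar_bound 0 (-1) 0 (-1) 0 1 (by decide) hv
    have h8 := scalar_bound 0 (-1) 1 0 0 1 (by decide) hv
    have h9 := scalar_bound 0 0 (-1) (-1) 0 1 (by decide) hv
    have h10 := scalar_bound 0 2 0 2 3 1 (by decide) hv
    have h11 := scalar_bound 1 1 0 (-1) 0 1 (by decide) hv
    have h12 := scalar_bound 1 1 0 2 3 1 (by decide) hv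
    have h13 := scalar_bound 1 1 1 0 0 1 (by decide) hv
    have h14 := scalar_bound 1 2 (-1) 2 3 1 (by decide) hv
    have h15 := scalar_bound 2 3 0 2 3 1 (by decide) hv
    have hb0 : v 0 ∈ Finset.Icc (-1:ℤ) 2 := Finset.mem_Icc.mpr (by omega)
    have hb1 : v 1 ∈ Finset.Icc (-1:ℤ) 2 := Finset.mem_Icc.mpr (by omega)
    have hb2 : v 2 ∈ Finset.Icc (-1:ℤ) 1 := Finset.mem_Icc.mpr (by omega)
    have hb3 : v 3 ∈ Finset.Icc (-1:ℤ) 2 := Finset.mem_Icc.mpr (by omega)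
    have hb4 : v 4 ∈ Finset.Icc (-1:ℤ) 1 := Finset.mem_Icc.mpr (by omega)
    have hcases := enum_lattice (v 0) hb0 (v 1) hb1 (v 2) hb2 (v 3) hb3 (v 4) hb4
      ⟨h1, h2, h3, h4, h5, h6, h7, h8, h9, h10, h11, h12, h13, h14, h15⟩
    rcases hcases with ⟨e0,e1,e2,e3,e4⟩|⟨e0,e1,e2,e3,e4⟩|⟨e0,e1,e2,e3,e4⟩|⟨e0,e1,e2,e3,e4⟩|
      ⟨e0,e1,e2,e3,e4⟩|⟨e0,e1,e2,e3,e4⟩|⟨e0,e1,e2,e3,e4⟩|⟨e0,e1,e2,e3,e4⟩|⟨e0,e1,e2,e3,e4⟩|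
      ⟨e0,e1,e2,e3,e4⟩|⟨e0,e1,e2,e3,e4⟩|⟨e0,e1,e2,e3,e4⟩|⟨e0,e1,e2,e3,e4⟩|⟨e0,e1,e2,e3,e4⟩|
      ⟨e0,e1,e2,e3,e4⟩
    · exact Or.inl (Or.inr ⟨0, (funext5 e0 e1 e2 e3 e4).symm⟩)
    · exact Or.inl (Or.inr ⟨1, (funext5 e0 e1 e2 e3 e4).symm⟩)
    · exact Or.inl (Or.inr ⟨2, (funext5 e0 e1 e2 e3 e4).symm⟩)
    · exact Or.inl (Or.inr ⟨3, (funext5 e0 e1 e2 e3 e4).symm⟩)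
    · exact Or.inl (Or.inr ⟨4, (funext5 e0 e1 e2 e3 e4).symm⟩)
    · exact Or.inl (Or.inr ⟨5, (funext5 e0 e1 e2 e3 e4).symm⟩)
    · exact Or.inl (Or.inr ⟨6, (funext5 e0 e1 e2 e3 e4).symm⟩)
    · exact Or.inl (Or.inr ⟨7, (funext5 e0 e1 e2 e3 e4).symm⟩)
    · exact Or.inl (Or.inr ⟨8, (funext5 e0 e1 e2 e3 e4).symm⟩)
    · exact Or.inl (Or.inr ⟨9, (funext5 e0 e1 e2 e3 e4).symm⟩)
    · exact Or.inl (Or.inr ⟨10, (funext5 e0 e1 e2 e3 e4).symm⟩)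
    · exact Or.inl (Or.inr ⟨11, (funext5 e0 e1 e2 e3 e4).symm⟩)
    · exact Or.inl (Or.inl (by funext i; fin_cases i <;> simpa))
    · exact Or.inr (Or.inl (funext5 e0 e1 e2 e3 e4))
    · exact Or.inr (Or.inr (funext5 e0 e1 e2 e3 e4))
  · rintro ((rfl | ⟨j, rfl⟩) | (rfl | rfl))
    · have h := combo3 0 1 2
      have e : (fun i => (((0 : Fin 5 → ℤ) i : ℤ) : ℝ)) =
          (fun i => (((nubar 0 i + nubar 1 i + nubar 2 i : ℤ) : ℝ)) / 3) := by
        have n0 : nubar 0 = ![2, -1, 0, 0, 0] := by decide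
        have n1 : nubar 1 = ![-1, 2, 0, 0, -1] := by decide
        have n2 : nubar 2 = ![-1, -1, 0, 0, 1] := by decide
        funext i; rw [n0, n1, n2]; fin_cases i <;> norm_num
      rw [e]; exact h
    · exact subset_convexHull ℝ _ ⟨j, rfl⟩
    · have h := combo3 3 4 5
      have e : (fun i => ((![0, 0, -1, 0, 0] i : ℤ) : ℝ)) =
          (fun i => (((nubar 3 i + nubar 4 i + nubar 5 i : ℤ) : ℝ)) / 3) := by
        have n3 : nubar 3 = ![2, -1, -1, 0, 0] := by decide
        have n4 : nubar 4 = ![-1, 2, -1, 0, -1] := by decide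
        have n5 : nubar 5 = ![-1, -1, -1, 0, 1] := by decide
        funext i; rw [n3, n4, n5]; fin_cases i <;> norm_num
      rw [e]; exact h
    · have h := combo3 9 10 11
      have e : (fun i => ((![0, 0, 1, 0, 0] i : ℤ) : ℝ)) =
          (fun i => (((nubar 9 i + nubar 10 i + nubar 11 i : ℤ) : ℝ)) / 3) := by
        have n9 : nubar 9 = ![0, 0, 1, 2, -1] := by decide
        have n10 : nubar 10 = ![0, 0, 1, -1, 1] := by decide
        have n11 : nubar 11 = ![0, 0, 1, -1, 0] := by decide
        funext i; rw [n9, n10, n11]; fin_cases i <;> norm_num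
      rw [e]; exact h
end

section
/- Let L ≤ ℤ⁵ be the subgroup generated by ρ̄₁,…,ρ̄₈ and set w = −e₂−e₅. Then: (i) L has index 3 in ℤ⁵; (ii) 3w = ρ̄₁ − ρ̄₂ + ρ̄₆ − ρ̄₇, so w ∉ L but 3w ∈ L; and (iii) the subgroup generated by L together with w is all of ℤ⁵. In other words, the vertices ρ̄ᵢ of Δ̄* span the original lattice N of index 3 inside the refined lattice N̄ = N + ℤw, realizing the free ℤ₃-quotient X̄ = X̃/G₁ torically. -/
/-- The vertices `ρ̄₁,…,ρ̄₈` of the polytope `Δ̄*` describing the partial quotient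
`X̄ = X̃/ℤ₃`, as elements of `ℤ⁵`. -/
def rhobar8 : Fin 8 → (Fin 5 → ℤ) :=
  ![![1, 0, 0, 0, 0],
    ![0, 1, 0, 0, 0],
    ![-1, -1, 0, 0, 0],
    ![0, 0, 1, 0, 0],
    ![0, 0, -1, 0, 0],
    ![0, 0, 0, 1, 0],
    ![1, 2, 0, 1, 3],
    ![-1, -2, 0, -2, -3]]

/-- The refinement vector `w = −e₂ − e₅`. -/
def wRefine : Fin 5 → ℤ := ![0, -1, 0, 0, -1]

/-- The homomorphism `ℤ⁵ → ℤ/3` sending `x` to `x 4 mod 3`. -/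
def fMod3 : (Fin 5 → ℤ) →+ ZMod 3 :=
  (Int.castAddHom (ZMod 3)).comp (Pi.evalAddMonoidHom (fun _ => ℤ) 4)

lemma closure_rhobar8_eq_ker :
    AddSubgroup.closure (Set.range rhobar8) = fMod3.ker := by
  apply le_antisymm
  · rw [AddSubgroup.closure_le]
    rintro x ⟨i, rfl⟩
    rw [SetLike.mem_coe, AddMonoidHom.mem_ker]
    fin_cases i <;> decide
  · intro x hx
    have hx0 : ((x 4 : ℤ) : ZMod 3) = 0 := hx
    obtain ⟨k, hk⟩ := (ZMod.intCast_zmod_eq_zero_iff_dvd _ 3).mp hx0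
    have hmem : ∀ i, rhobar8 i ∈ AddSubgroup.closure (Set.range rhobar8) := fun i =>
      AddSubgroup.subset_closure ⟨i, rfl⟩
    have hE : rhobar8 6 - rhobar8 0 - (2 : ℤ) • rhobar8 1 - rhobar8 5 =
        ![0, 0, 0, 0, 3] := by decide
    have h3e5 : (![0, 0, 0, 0, 3] : Fin 5 → ℤ) ∈
        AddSubgroup.closure (Set.range rhobar8) := by
      rw [← hE]
      exact sub_mem (sub_mem (sub_mem (hmem 6) (hmem 0))
        (AddSubgroup.zsmul_mem _ (hmem 1) 2)) (hmem 5)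
    have hx2 : x = x 0 • ![1, 0, 0, 0, 0] + x 1 • ![0, 1, 0, 0, 0] +
        x 2 • ![0, 0, 1, 0, 0] + x 3 • ![0, 0, 0, 1, 0] +
        k • (![0, 0, 0, 0, 3] : Fin 5 → ℤ) := by
      funext j
      fin_cases j <;> simp <;> omega
    rw [hx2]
    exact add_mem (add_mem (add_mem (add_mem
      (AddSubgroup.zsmul_mem _ (hmem 0) _) (AddSubgroup.zsmul_mem _ (hmem 1) _))
      (AddSubgroup.zsmul_mem _ (hmem 3) _)) (AddSubgroup.zsmul_mem _ (hmem 5) _))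
      (AddSubgroup.zsmul_mem _ h3e5 _)

/-- **The lattice refinement realizing the free `ℤ₃`-quotient `X̄ = X̃/G₁` torically.**
Let `L ≤ ℤ⁵` be the subgroup generated by `ρ̄₁,…,ρ̄₈` and `w = −e₂−e₅`. Then
(i) `L` has index 3 in `ℤ⁵`; (ii) `3w = ρ̄₁ − ρ̄₂ + ρ̄₆ − ρ̄₇`, and `w ∉ L` while
`3w ∈ L`; and (iii) `L` together with `w` generates all of `ℤ⁵`. -/
theorem lattice_refinement_Deltabar :
    (AddSubgroup.closure (Set.range rhobar8)).index = 3 ∧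
    (3 : ℤ) • wRefine = rhobar8 0 - rhobar8 1 + rhobar8 5 - rhobar8 6 ∧
    wRefine ∉ AddSubgroup.closure (Set.range rhobar8) ∧
    (3 : ℤ) • wRefine ∈ AddSubgroup.closure (Set.range rhobar8) ∧
    AddSubgroup.closure (insert wRefine (Set.range rhobar8)) = ⊤ := by
  refine ⟨?_, ?_, ?_, ?_, ?_⟩
  · rw [closure_rhobar8_eq_ker, AddSubgroup.index_ker]
    have hsurj : Function.Surjective fMod3 := by
      intro c
      obtain ⟨n, hn⟩ := ZMod.intCast_surjective (n := 3) c
      exact ⟨fun _ => n, hn⟩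
    rw [AddMonoidHom.range_eq_top.mpr hsurj]
    have : Nat.card (⊤ : AddSubgroup (ZMod 3)) = Nat.card (ZMod 3) :=
      Nat.card_congr (AddSubgroup.topEquiv (G := ZMod 3)).toEquiv
    rw [this, Nat.card_zmod]
  · decide
  · rw [closure_rhobar8_eq_ker, AddMonoidHom.mem_ker]
    decide
  · rw [closure_rhobar8_eq_ker, AddMonoidHom.mem_ker]
    decide
  · rw [eq_top_iff]
    intro x _
    have hw : wRefine ∈ AddSubgroup.closure (insert wRefine (Set.range rhobar8)) :=
      AddSubgroup.subset_closure (Set.mem_insert _ _)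
    have hr : ∀ i, rhobar8 i ∈
        AddSubgroup.closure (insert wRefine (Set.range rhobar8)) := fun i =>
      AddSubgroup.subset_closure (Set.mem_insert_of_mem _ ⟨i, rfl⟩)
    have h1 : rhobar8 0 = ![1, 0, 0, 0, 0] := rfl
    have h2 : rhobar8 1 = ![0, 1, 0, 0, 0] := rfl
    have h3 : rhobar8 3 = ![0, 0, 1, 0, 0] := rfl
    have h4 : rhobar8 5 = ![0, 0, 0, 1, 0] := rfl
    have hx : x = x 0 • rhobar8 0 + (x 1 - x 4) • rhobar8 1 + x 2 • rhobar8 3 +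
        x 3 • rhobar8 5 + (-(x 4)) • wRefine := by
      rw [h1, h2, h3, h4]
      funext j
      fin_cases j <;> simp [wRefine] <;> ring
    rw [hx]
    exact add_mem (add_mem (add_mem (add_mem
      (AddSubgroup.zsmul_mem _ (hr 0) _) (AddSubgroup.zsmul_mem _ (hr 1) _))
      (AddSubgroup.zsmul_mem _ (hr 3) _)) (AddSubgroup.zsmul_mem _ (hr 5) _))
      (AddSubgroup.zsmul_mem _ hw _)
end

section
/- Let M̄ ≤ ℤ⁵ be the subgroup generated by the lattice points ν̄₁, …, ν̄₁₂, −e₃, e₃ of ∇̄*, and set w* = e₂ + e₄ − e₅. Then: (i) M̄ has index 3 in ℤ⁵; (ii) 3w* = ν̄₁ + 2ν̄₂ + 2ν̄₇ + ν̄₈, so w* ∉ M̄ but 3w* ∈ M̄; and (iii) the subgroup generated by M̄ together with w* is all of ℤ⁵. In other words, the lattice points of ∇̄* generate a sublattice M̄ of index 3 in M, whose refinement to M is generated by w* — so the mirror X̄* is itself a free ℤ₃-quotient. -/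
/-- The 14 lattice points `ν̄₁, …, ν̄₁₂, ν̄₁₃ = −e₃, ν̄₁₄ = e₃` of the polytope `∇̄*`
(the ambient polytope of the mirror `X̄*` of the partial quotient `X̄`), as elements
of `ℤ⁵`. -/
def nubarPts : Fin 14 → (Fin 5 → ℤ) :=
  ![![2, -1, 0, 0, 0],
    ![-1, 2, 0, 0, -1],
    ![-1, -1, 0, 0, 1],
    ![2, -1, -1, 0, 0],
    ![-1, 2, -1, 0, -1],
    ![-1, -1, -1, 0, 1],
    ![0, 0, 0, 2, -1],
    ![0, 0, 0, -1, 1],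
    ![0, 0, 0, -1, 0],
    ![0, 0, 1, 2, -1],
    ![0, 0, 1, -1, 1],
    ![0, 0, 1, -1, 0],
    ![0, 0, -1, 0, 0],
    ![0, 0, 1, 0, 0]]

/-- The refinement vector `w* = e₂ + e₄ − e₅`. -/
def wStarRefine : Fin 5 → ℤ := ![0, 1, 0, 1, -1]

namespace LRN

def f : (Fin 5 → ℤ) →+ ZMod 3 where
  toFun x := ((x 0 : ZMod 3) + 2 * (x 1 : ZMod 3))
  map_zero' := by simp
  map_add' x y := by push_cast [Pi.add_apply]; ring

lemma f_apply (x : Fin 5 → ℤ) : f x = (x 0 : ZMod 3) + 2 * (x 1 : ZMod 3) := rfl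

abbrev M : AddSubgroup (Fin 5 → ℤ) := AddSubgroup.closure (Set.range nubarPts)

lemma gen_mem (i : Fin 14) : nubarPts i ∈ M :=
  AddSubgroup.subset_closure ⟨i, rfl⟩

lemma e4_mem : (![0,0,0,1,0] : Fin 5 → ℤ) ∈ M := by
  have h : (![0,0,0,1,0] : Fin 5 → ℤ) = nubarPts 6 + nubarPts 7 := by decide
  rw [h]; exact add_mem (gen_mem 6) (gen_mem 7)

lemma e5_mem : (![0,0,0,0,1] : Fin 5 → ℤ) ∈ M := by
  have h : (![0,0,0,0,1] : Fin 5 → ℤ) = nubarPts 7 + ![0,0,0,1,0] := by decide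
  rw [h]; exact add_mem (gen_mem 7) e4_mem

lemma e3_mem : (![0,0,1,0,0] : Fin 5 → ℤ) ∈ M := by
  have h : (![0,0,1,0,0] : Fin 5 → ℤ) = nubarPts 13 := by decide
  rw [h]; exact gen_mem 13

lemma v_mem : (![1,1,0,0,0] : Fin 5 → ℤ) ∈ M := by
  have h : (![1,1,0,0,0] : Fin 5 → ℤ) = nubarPts 0 + nubarPts 1 + ![0,0,0,0,1] := by decide
  rw [h]; exact add_mem (add_mem (gen_mem 0) (gen_mem 1)) e5_mem

lemma u_mem : (![3,0,0,0,0] : Fin 5 → ℤ) ∈ M := by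
  have h : (![3,0,0,0,0] : Fin 5 → ℤ)
      = (2:ℤ) • nubarPts 0 + nubarPts 1 + ![0,0,0,0,1] := by decide
  rw [h]
  exact add_mem (add_mem (AddSubgroup.zsmul_mem _ (gen_mem 0) 2) (gen_mem 1)) e5_mem

lemma M_le_ker : M ≤ f.ker := by
  rw [AddSubgroup.closure_le]
  rintro _ ⟨i, rfl⟩
  fin_cases i <;> simp [AddMonoidHom.mem_ker, f_apply, nubarPts] <;> decide

lemma ker_le_M : f.ker ≤ M := by
  intro x hx
  rw [AddMonoidHom.mem_ker, f_apply] at hx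
  have h3 : (3:ℤ) ∣ x 0 + 2 * x 1 := by
    have : ((x 0 + 2 * x 1 : ℤ) : ZMod 3) = 0 := by push_cast; exact hx
    exact (ZMod.intCast_zmod_eq_zero_iff_dvd _ 3).mp this
  obtain ⟨k, hk⟩ := h3
  have hx0 : x 0 = 3 * k - 2 * x 1 := by omega
  have hrep : x = (k - x 1) • (![3,0,0,0,0] : Fin 5 → ℤ) + (x 1) • ![1,1,0,0,0]
      + (x 2) • ![0,0,1,0,0] + (x 3) • ![0,0,0,1,0] + (x 4) • ![0,0,0,0,1] := by
    funext j
    fin_cases j <;>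
      simp [Pi.add_apply, Pi.smul_apply, smul_eq_mul] <;> omega
  rw [hrep]
  exact add_mem (add_mem (add_mem (add_mem
    (AddSubgroup.zsmul_mem _ u_mem _) (AddSubgroup.zsmul_mem _ v_mem _))
    (AddSubgroup.zsmul_mem _ e3_mem _)) (AddSubgroup.zsmul_mem _ e4_mem _))
    (AddSubgroup.zsmul_mem _ e5_mem _)

lemma M_eq_ker : M = f.ker := le_antisymm M_le_ker ker_le_M

lemma f_surj : Function.Surjective f := by
  intro c
  refine ⟨(fun j => if j = 0 then (c.val : ℤ) else 0), ?_⟩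
  simp [f_apply, ZMod.natCast_val, ZMod.cast_id]

end LRN

/-- **The mirror `X̄*` is itself a free `ℤ₃`-quotient.**
Let `M̄ ≤ ℤ⁵` be the subgroup generated by the 14 lattice points of `∇̄*`, and
`w* = e₂ + e₄ − e₅`. Then (i) `M̄` has index 3 in `ℤ⁵`; (ii)
`3w* = ν̄₁ + 2ν̄₂ + 2ν̄₇ + ν̄₈`, and `w* ∉ M̄` while `3w* ∈ M̄`; and (iii) `M̄`
together with `w*` generates all of `ℤ⁵`. -/
theorem lattice_refinement_Nablabar :
    (AddSubgroup.closure (Set.range nubarPts)).index = 3 ∧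
    (3 : ℤ) • wStarRefine
      = nubarPts 0 + (2 : ℤ) • nubarPts 1 + (2 : ℤ) • nubarPts 6 + nubarPts 7 ∧
    wStarRefine ∉ AddSubgroup.closure (Set.range nubarPts) ∧
    (3 : ℤ) • wStarRefine ∈ AddSubgroup.closure (Set.range nubarPts) ∧
    AddSubgroup.closure (insert wStarRefine (Set.range nubarPts)) = ⊤ := by
  refine ⟨?_, ?_, ?_, ?_, ?_⟩
  · rw [show AddSubgroup.closure (Set.range nubarPts) = LRN.f.ker from LRN.M_eq_ker]
    rw [AddSubgroup.index_ker]
    rw [AddMonoidHom.range_eq_top.mpr LRN.f_surj]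
    rw [Nat.card_congr AddSubgroup.topEquiv.toEquiv, Nat.card_eq_fintype_card]
    exact ZMod.card 3
  · decide
  · intro h
    have := LRN.M_le_ker h
    rw [AddMonoidHom.mem_ker, LRN.f_apply] at this
    revert this
    decide
  · have h : (3:ℤ) • wStarRefine
        = nubarPts 0 + (2:ℤ) • nubarPts 1 + (2:ℤ) • nubarPts 6 + nubarPts 7 := by decide
    rw [h]
    exact add_mem (add_mem (add_mem (LRN.gen_mem 0)
      (AddSubgroup.zsmul_mem _ (LRN.gen_mem 1) 2))
      (AddSubgroup.zsmul_mem _ (LRN.gen_mem 6) 2)) (LRN.gen_mem 7)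
  · set M' := AddSubgroup.closure (insert wStarRefine (Set.range nubarPts)) with hM'
    have hMle : LRN.M ≤ M' := AddSubgroup.closure_mono (Set.subset_insert _ _)
    have hw : wStarRefine ∈ M' := AddSubgroup.subset_closure (Set.mem_insert _ _)
    have he2 : (![0,1,0,0,0] : Fin 5 → ℤ) ∈ M' := by
      have h : (![0,1,0,0,0] : Fin 5 → ℤ)
          = wStarRefine - ![0,0,0,1,0] + ![0,0,0,0,1] := by decide
      rw [h]
      exact add_mem (sub_mem hw (hMle LRN.e4_mem)) (hMle LRN.e5_mem)
    have he1 : (![1,0,0,0,0] : Fin 5 → ℤ) ∈ M' := by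
      have h : (![1,0,0,0,0] : Fin 5 → ℤ) = ![1,1,0,0,0] - ![0,1,0,0,0] := by decide
      rw [h]
      exact sub_mem (hMle LRN.v_mem) he2
    rw [eq_top_iff]
    intro x _
    have hrep : x = (x 0) • (![1,0,0,0,0] : Fin 5 → ℤ) + (x 1) • ![0,1,0,0,0]
        + (x 2) • ![0,0,1,0,0] + (x 3) • ![0,0,0,1,0] + (x 4) • ![0,0,0,0,1] := by
      funext j
      fin_cases j <;> simp [Pi.add_apply, Pi.smul_apply, smul_eq_mul]
    rw [hrep]
    exact add_mem (add_mem (add_mem (add_mem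
      (AddSubgroup.zsmul_mem _ he1 _) (AddSubgroup.zsmul_mem _ he2 _))
      (AddSubgroup.zsmul_mem _ (hMle LRN.e3_mem) _))
      (AddSubgroup.zsmul_mem _ (hMle LRN.e4_mem) _))
      (AddSubgroup.zsmul_mem _ (hMle LRN.e5_mem) _)
end

section
/- In the polynomial ring ℚ[K₁,K₂,K₃], the ideal quotient ⟨K₁², K₂³, K₃³⟩ : ((K₁+3K₂)(K₁+3K₃)) — i.e. the ideal of all f with f·(K₁+3K₂)(K₁+3K₃) ∈ ⟨K₁², K₂³, K₃³⟩ — is equal to the ideal ⟨K₂K₃² − K₂²K₃, K₁K₂ − 3K₂², K₁K₃ − 3K₃², K₁², K₂³, K₃³⟩. -/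
/-!
Write `I = ⟨K₁², K₂³, K₃³⟩`, `p = (K₁+3K₂)(K₁+3K₃)` and `J` for the six-generator ideal.
Each generator of `J` times `p` is written explicitly as a combination of `K₁², K₂³, K₃³`,
so `J ⊆ I : p`. Conversely, modulo `J` every polynomial is a `ℚ`-combination `s`
of the eight monomials `1, K₁, K₂, K₃, K₂², K₃², K₂K₃, K₂²K₃`, because multiplying one of them by a
variable gives `0`, `1` or `3` times another one modulo `J`. If moreover `s · p ∈ I`, then the
coefficients of `s · p` at monomials outside the monomial ideal `I` vanish, and eight of these
coefficients form a triangular system in the coefficients of `s`; hence `s = 0`.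
-/

open MvPolynomial

namespace MvPolynomial

variable {σ R : Type*} [CommSemiring R]

theorem coeff_eq_zero_of_mem_span_X_pow {n : σ → ℕ} {p : MvPolynomial σ R}
    (hp : p ∈ Ideal.span (Set.range fun i => X i ^ n i)) {m : σ →₀ ℕ} (hm : ∀ i, m i < n i) :
    coeff m p = 0 := by
  have hspan : (Set.range fun i => (X i ^ n i : MvPolynomial σ R)) =
      (fun t => monomial t (1 : R)) '' Set.range fun i => Finsupp.single i (n i) := by
    simp [← Set.range_comp, Function.comp_def, X_pow_eq_monomial]
  rw [hspan] at hp
  by_contra h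
  obtain ⟨_, ⟨i, rfl⟩, hle⟩ := mem_ideal_span_monomial_image.1 hp m (mem_support_iff.2 h)
  exact (hm i).not_ge (by simpa using hle i)

end MvPolynomial

namespace Xtilde

noncomputable def stanleyReisnerIdeal : Ideal (MvPolynomial (Fin 3) ℚ) :=
  Ideal.span {X 0 ^ 2, X 1 ^ 3, X 2 ^ 3}

noncomputable def hypersurfaceProduct : MvPolynomial (Fin 3) ℚ :=
  (X 0 + 3 * X 1) * (X 0 + 3 * X 2)

noncomputable def intersectionIdeal : Ideal (MvPolynomial (Fin 3) ℚ) :=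
  Ideal.span {X 1 * X 2 ^ 2 - X 1 ^ 2 * X 2, X 0 * X 1 - 3 * X 1 ^ 2, X 0 * X 2 - 3 * X 2 ^ 2,
    X 0 ^ 2, X 1 ^ 3, X 2 ^ 3}

theorem stanleyReisnerIdeal_eq_span_range :
    stanleyReisnerIdeal = Ideal.span (Set.range fun i => X i ^ ![2, 3, 3] i) := by
  rw [stanleyReisnerIdeal]
  congr 1
  ext q
  simp [Fin.exists_fin_succ, eq_comm]

theorem mem_stanleyReisnerIdeal_iff {q : MvPolynomial (Fin 3) ℚ} :
    q ∈ stanleyReisnerIdeal ↔ ∃ f₀ f₁ f₂, f₀ * X 0 ^ 2 + f₁ * X 1 ^ 3 + f₂ * X 2 ^ 3 = q := by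
  rw [stanleyReisnerIdeal_eq_span_range, Ideal.mem_span_range_iff_exists_fun]
  simp [Fin.sum_univ_three, Fin.exists_fin_succ_pi]

theorem intersectionIdeal_le_colon :
    intersectionIdeal ≤ stanleyReisnerIdeal.colon (Ideal.span {hypersurfaceProduct}) := by
  rw [intersectionIdeal, Ideal.span_le]
  intro g hg
  rw [SetLike.mem_coe, Ideal.mem_colon_span_singleton, mem_stanleyReisnerIdeal_iff,
    hypersurfaceProduct]
  rcases hg with rfl | rfl | rfl | rfl | rfl | rfl
  · exact ⟨X 1 * X 2 * (X 2 - X 1), -3 * X 2 * (X 0 + 3 * X 2), 3 * X 1 * (X 0 + 3 * X 1),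
      by ring⟩
  · exact ⟨X 1 * (X 0 + 3 * X 2), -9 * (X 0 + 3 * X 2), 0, by ring⟩
  · exact ⟨X 2 * (X 0 + 3 * X 1), 0, -9 * (X 0 + 3 * X 1), by ring⟩
  · exact ⟨(X 0 + 3 * X 1) * (X 0 + 3 * X 2), 0, 0, by ring⟩
  · exact ⟨0, (X 0 + 3 * X 1) * (X 0 + 3 * X 2), 0, by ring⟩
  · exact ⟨0, 0, (X 0 + 3 * X 1) * (X 0 + 3 * X 2), by ring⟩

section StandardMonomials

variable {A B : Type*} [CommSemiring A] [CommSemiring B]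

def standardMonomial (x : Fin 3 → A) : Fin 8 → A :=
  ![1, x 0, x 1, x 2, x 1 ^ 2, x 2 ^ 2, x 1 * x 2, x 1 ^ 2 * x 2]

theorem map_standardMonomial (f : A →+* B) (x : Fin 3 → A) (k : Fin 8) :
    f (standardMonomial x k) = standardMonomial (f ∘ x) k := by
  fin_cases k <;> simp [standardMonomial]

/-- Multiplication by the variables on the standard monomials modulo the relations of
`intersectionIdeal`: the entry `(n, k')` at `i, k` stands for `n • standardMonomial x k'`. -/
def reduction : Fin 3 → Fin 8 → ℕ × Fin 8 :=
  ![![(1, 1), (0, 0), (3, 4), (3, 5), (0, 0), (0, 0), (3, 7), (0, 0)],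
    ![(1, 2), (3, 4), (1, 4), (1, 6), (0, 0), (1, 7), (1, 7), (0, 0)],
    ![(1, 3), (3, 5), (1, 6), (1, 5), (1, 7), (0, 0), (1, 7), (0, 0)]]

theorem mul_standardMonomial {R : Type*} [CommRing R] {x : Fin 3 → R}
    (h₁ : x 1 * x 2 ^ 2 = x 1 ^ 2 * x 2) (h₂ : x 0 * x 1 = 3 * x 1 ^ 2)
    (h₃ : x 0 * x 2 = 3 * x 2 ^ 2) (h₄ : x 0 ^ 2 = 0) (h₅ : x 1 ^ 3 = 0) (h₆ : x 2 ^ 3 = 0)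
    (i : Fin 3) (k : Fin 8) :
    x i * standardMonomial x k = (reduction i k).1 • standardMonomial x (reduction i k).2 := by
  fin_cases i <;> fin_cases k <;> simp [reduction, standardMonomial] <;> grind

end StandardMonomials

noncomputable abbrev standardSpan : Submodule ℚ (MvPolynomial (Fin 3) ℚ) :=
  Submodule.span ℚ (Set.range (standardMonomial X)) ⊔ intersectionIdeal.restrictScalars ℚ

theorem X_mul_standardMonomial_mem (i : Fin 3) (k : Fin 8) :
    X i * standardMonomial X k ∈ standardSpan := by
  have rel : ∀ g ∈ ({X 1 * X 2 ^ 2 - X 1 ^ 2 * X 2, X 0 * X 1 - 3 * X 1 ^ 2,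
      X 0 * X 2 - 3 * X 2 ^ 2, X 0 ^ 2, X 1 ^ 3, X 2 ^ 3} : Set (MvPolynomial (Fin 3) ℚ)),
      Ideal.Quotient.mk intersectionIdeal g = 0 :=
    fun g hg => Ideal.Quotient.eq_zero_iff_mem.2 (Ideal.subset_span hg)
  simp only [Set.mem_insert_iff, Set.mem_singleton_iff, forall_eq_or_imp, forall_eq, map_sub,
    map_mul, map_pow, map_ofNat, sub_eq_zero] at rel
  obtain ⟨h₁, h₂, h₃, h₄, h₅, h₆⟩ := rel
  have key := mul_standardMonomial (x := Ideal.Quotient.mk intersectionIdeal ∘ X)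
    h₁ h₂ h₃ h₄ h₅ h₆ i k
  rw [← map_standardMonomial, ← map_standardMonomial, Function.comp_apply, ← map_mul, ← map_nsmul,
    Ideal.Quotient.eq] at key
  rw [← sub_add_cancel (X i * standardMonomial X k) ((reduction i k).1 • _)]
  exact add_mem (Submodule.mem_sup_right key) (Submodule.mem_sup_left
    (Submodule.smul_of_tower_mem _ _ (Submodule.subset_span ⟨_, rfl⟩)))

theorem X_mul_mem_standardSpan (i : Fin 3) {f : MvPolynomial (Fin 3) ℚ} (hf : f ∈ standardSpan) :
    X i * f ∈ standardSpan := by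
  obtain ⟨s, hs, j, hj, rfl⟩ := Submodule.mem_sup.1 hf
  clear hf
  rw [mul_add]
  refine add_mem ?_ (Submodule.mem_sup_right (intersectionIdeal.mul_mem_left _ hj))
  induction hs using Submodule.span_induction with
  | mem _ h => obtain ⟨k, rfl⟩ := h; exact X_mul_standardMonomial_mem i k
  | zero => simp
  | add _ _ _ _ h₁ h₂ => rw [mul_add]; exact add_mem h₁ h₂
  | smul a _ _ h => rw [mul_smul_comm]; exact Submodule.smul_mem _ a h

theorem standardSpan_eq_top : standardSpan = ⊤ := by
  refine Submodule.eq_top_iff'.2 fun f => ?_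
  induction f using MvPolynomial.induction_on with
  | C a =>
    rw [C_eq_smul_one]
    exact Submodule.mem_sup_left (Submodule.smul_mem _ a (Submodule.subset_span ⟨0, rfl⟩))
  | add _ _ h₁ h₂ => exact add_mem h₁ h₂
  | mul_X f i h => rw [mul_comm]; exact X_mul_mem_standardSpan i h

theorem eq_zero_of_mul_hypersurfaceProduct_mem {s : MvPolynomial (Fin 3) ℚ}
    (hs : s ∈ Submodule.span ℚ (Set.range (standardMonomial X)))
    (h : s * hypersurfaceProduct ∈ stanleyReisnerIdeal) : s = 0 := by
  obtain ⟨c, rfl⟩ := Submodule.mem_span_range_iff_exists_fun ℚ |>.1 hs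
  rw [stanleyReisnerIdeal_eq_span_range] at h
  have coeff_eq_zero (v : Fin 3 → ℕ) (hv : ∀ i, v i < ![2, 3, 3] i) :=
    coeff_eq_zero_of_mem_span_X_pow h (m := Finsupp.equivFunOnFinite.symm v) (by simpa using hv)
  have e₁ := coeff_eq_zero ![0, 1, 1] (by decide)
  have e₂ := coeff_eq_zero ![1, 2, 0] (by decide)
  have e₃ := coeff_eq_zero ![1, 0, 2] (by decide)
  have e₄ := coeff_eq_zero ![1, 1, 1] (by decide)
  have e₅ := coeff_eq_zero ![0, 2, 2] (by decide)
  have e₆ := coeff_eq_zero ![1, 2, 1] (by decide)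
  have e₇ := coeff_eq_zero ![1, 1, 2] (by decide)
  have e₈ := coeff_eq_zero ![1, 2, 2] (by decide)
  have h3 : (3 : MvPolynomial (Fin 3) ℚ) = monomial 0 3 := rfl
  simp only [Fin.sum_univ_eight, standardMonomial, hypersurfaceProduct, Matrix.cons_val,
    smul_monomial, h3, X, ← C_1, C_apply, monomial_pow, monomial_mul, mul_add, add_mul,
    coeff_add, coeff_monomial, ← DFunLike.coe_fn_eq, Finsupp.coe_add, Finsupp.coe_smul,
    Finsupp.single_eq_pi_single, Finsupp.coe_zero, Finsupp.coe_equivFunOnFinite_symm]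
    at e₁ e₂ e₃ e₄ e₅ e₆ e₇ e₈
  simp +decide at e₁ e₂ e₃ e₄ e₅ e₆ e₇ e₈
  have hc : c = 0 := by
    funext k
    fin_cases k <;> simp <;> linarith
  simp [hc]

theorem colon_le_intersectionIdeal :
    stanleyReisnerIdeal.colon (Ideal.span {hypersurfaceProduct}) ≤ intersectionIdeal := by
  intro f hf
  have hf' : f ∈ standardSpan := standardSpan_eq_top ▸ Submodule.mem_top
  obtain ⟨s, hs, j, hj, rfl⟩ := Submodule.mem_sup.1 hf'
  have hsp : s * hypersurfaceProduct ∈ stanleyReisnerIdeal := by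
    simpa [add_mul] using sub_mem (Ideal.mem_colon_span_singleton.1 hf)
      (Ideal.mem_colon_span_singleton.1 (intersectionIdeal_le_colon hj))
  rwa [eq_zero_of_mul_hypersurfaceProduct_mem hs hsp, zero_add]

end Xtilde

/-- **The toric intersection ideal of the Calabi–Yau complete intersection `X̃`.**
In `ℚ[K₁,K₂,K₃]` (with `K₁ = X 0`, `K₂ = X 1`, `K₃ = X 2`), the ideal quotient of the
Stanley–Reisner ideal `⟨K₁², K₂³, K₃³⟩` of `ℙ²×ℙ¹×ℙ²` by the product
`(K₁+3K₂)(K₁+3K₃)` of the classes of the two hypersurfaces cutting out `X̃` is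
`⟨K₂K₃² − K₂²K₃, K₁K₂ − 3K₂², K₁K₃ − 3K₃², K₁², K₂³, K₃³⟩`. -/
theorem ideal_quotient_Xtilde :
    (Ideal.span {X 0 ^ 2, X 1 ^ 3, X 2 ^ 3} :
        Ideal (MvPolynomial (Fin 3) ℚ)).colon
      ((Ideal.span {(X 0 + 3 * X 1) * (X 0 + 3 * X 2)} :
        Ideal (MvPolynomial (Fin 3) ℚ)) : Set (MvPolynomial (Fin 3) ℚ)) =
    Ideal.span {X 1 * X 2 ^ 2 - X 1 ^ 2 * X 2,
      X 0 * X 1 - 3 * X 1 ^ 2,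
      X 0 * X 2 - 3 * X 2 ^ 2,
      X 0 ^ 2, X 1 ^ 3, X 2 ^ 3} :=
  le_antisymm Xtilde.colon_le_intersectionIdeal Xtilde.intersectionIdeal_le_colon
end
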